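/- There is a universal constant C > 0 such that the following holds. Let n, m ≥ 1, δ > 0, η ∈ (0,1), let A ∈ ℝ^{n×n} be symmetric with zero diagonal whose every row A_i is nonzero, let p(x) = xᵀAx, and suppose ρ ≥ C·δ·n^{3/2}·m/η. Let x^{(1)}, …, x^{(m)} be independent random vectors each distributed as N(0,ρ²)ⁿ, and define s^{(ℓ)} ∈ {−1,1}ⁿ by s^{(ℓ)}_i = +1 if ⟨A_i, x^{(ℓ)}⟩ ≥ 0 and −1 otherwise. Then with probability at least 1 − η, for every ℓ ∈ [m]: z ≥ xᵀAx for every (x, z) with ‖x − (x^{(ℓ)} − δs^{(ℓ)})‖∞ ≤ δ and |z − (p(x^{(ℓ)}) + δ)| ≤ δ, and z ≤ xᵀAx for every (x, z) with ‖x − (x^{(ℓ)} + δs^{(ℓ)})‖∞ ≤ δ and |z − (p(x^{(ℓ)}) − δ)| ≤ δ. -/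

import Mathlib

/-!
Write `x = y + u` with `y = x⁽ˡ⁾`. For symmetric `A`,
`xᵀAx = yᵀAy + 2⟨u, Ay⟩ + uᵀAu` and `|uᵀAu| ≤ 2δ ∑ᵢ |uᵢ| ‖Aᵢ‖₁` once `‖u‖∞ ≤ 2δ`.
On the two boxes `u` moves every coordinate against (resp. along) the sign of `(Ay)ᵢ`, so if
`|(Ay)ᵢ| ≥ δ‖Aᵢ‖₁` for every row, the linear term dominates and `xᵀAx ≤ yᵀAy ≤ z`
(resp. `z ≤ yᵀAy ≤ xᵀAx`). Since `⟨Aᵢ, y⟩ ~ N(0, ρ²‖Aᵢ‖₂²)` has density at most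
`1 / (√(2π) ρ ‖Aᵢ‖₂)` and `‖Aᵢ‖₁ ≤ √n ‖Aᵢ‖₂`, each of the `mn` margin conditions fails with
probability at most `δ√n/ρ`, and a union bound gives the theorem with `C = 1`.
-/

open MeasureTheory ProbabilityTheory
open scoped NNReal ENNReal Matrix

section QuadraticForm

variable {ι : Type*} [Fintype ι] (A : Matrix ι ι ℝ)

theorem sum_sum_mul_mul_eq_dotProduct_mulVec (x : ι → ℝ) :
    ∑ i, ∑ j, A i j * x i * x j = x ⬝ᵥ A *ᵥ x := by
  simp only [dotProduct, Matrix.mulVec, Finset.mul_sum]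
  exact Finset.sum_congr rfl fun _ _ => Finset.sum_congr rfl fun _ _ => by ring

variable {A} in
theorem dotProduct_mulVec_add_self (hA : A.IsSymm) (y u : ι → ℝ) :
    (y + u) ⬝ᵥ A *ᵥ (y + u) = y ⬝ᵥ A *ᵥ y + 2 * (u ⬝ᵥ A *ᵥ y) + u ⬝ᵥ A *ᵥ u := by
  have hcross : y ⬝ᵥ A *ᵥ u = u ⬝ᵥ A *ᵥ y := by
    rw [Matrix.dotProduct_mulVec, ← Matrix.mulVec_transpose, hA.eq, dotProduct_comm]
  simp only [Matrix.mulVec_add, dotProduct_add, add_dotProduct, hcross]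
  ring

theorem abs_mulVec_apply_le {u : ι → ℝ} {r : ℝ} (hu : ∀ j, |u j| ≤ r) (i : ι) :
    |(A *ᵥ u) i| ≤ r * ∑ j, |A i j| :=
  calc |(A *ᵥ u) i| ≤ ∑ j, |A i j| * |u j| :=
        (Finset.abs_sum_le_sum_abs (fun j => A i j * u j) _).trans_eq (by simp only [abs_mul])
    _ ≤ ∑ j, |A i j| * r := by gcongr with j; exact hu j
    _ = r * ∑ j, |A i j| := by rw [← Finset.sum_mul, mul_comm]

theorem abs_dotProduct_mulVec_self_le {u : ι → ℝ} {r : ℝ} (hu : ∀ j, |u j| ≤ r) :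
    |u ⬝ᵥ A *ᵥ u| ≤ r * ∑ i, |u i| * ∑ j, |A i j| :=
  calc |u ⬝ᵥ A *ᵥ u| ≤ ∑ i, |u i| * |(A *ᵥ u) i| :=
        (Finset.abs_sum_le_sum_abs (fun i => u i * (A *ᵥ u) i) _).trans_eq
          (by simp only [abs_mul])
    _ ≤ ∑ i, |u i| * (r * ∑ j, |A i j|) := by gcongr with i; exact abs_mulVec_apply_le A hu i
    _ = r * ∑ i, |u i| * ∑ j, |A i j| := by
        rw [Finset.mul_sum]; exact Finset.sum_congr rfl fun _ _ => by ring

variable {A} in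
theorem abs_dotProduct_mulVec_add_sub_le (hA : A.IsSymm) (y : ι → ℝ) {u : ι → ℝ} {r : ℝ}
    (hu : ∀ j, |u j| ≤ r) :
    |(y + u) ⬝ᵥ A *ᵥ (y + u) - y ⬝ᵥ A *ᵥ y - 2 * (u ⬝ᵥ A *ᵥ y)|
      ≤ r * ∑ i, |u i| * ∑ j, |A i j| := by
  rw [dotProduct_mulVec_add_self hA]
  convert abs_dotProduct_mulVec_self_le A hu using 2
  ring

end QuadraticForm

theorem abs_le_and_mul_le_of_abs_add_le {a k w δ : ℝ} (hk : k ≤ |a|)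
    (hw : |w + δ * (if 0 ≤ a then 1 else -1)| ≤ δ) :
    |w| ≤ 2 * δ ∧ w * a ≤ -(k * |w|) := by
  rw [abs_le] at hw
  split_ifs at hw with ha
  · rw [abs_of_nonneg ha] at hk
    rw [abs_of_nonpos (by linarith)]
    constructor <;> nlinarith
  · rw [abs_of_neg (not_le.1 ha)] at hk
    rw [abs_of_nonneg (by linarith)]
    constructor <;> nlinarith

section Robustness

variable {ι : Type*} [Fintype ι] {A : Matrix ι ι ℝ} {δ : ℝ} {y : ι → ℝ}

theorem dotProduct_mulVec_add_le (hA : A.IsSymm) {u : ι → ℝ}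
    (hu : ∀ i, |u i| ≤ 2 * δ ∧ u i * (A *ᵥ y) i ≤ -(δ * (∑ j, |A i j|) * |u i|)) :
    (y + u) ⬝ᵥ A *ᵥ (y + u) ≤ y ⬝ᵥ A *ᵥ y := by
  have hquad := abs_dotProduct_mulVec_add_sub_le hA y fun j => (hu j).1
  have hlin : u ⬝ᵥ A *ᵥ y ≤ -(δ * ∑ i, |u i| * ∑ j, |A i j|) :=
    calc u ⬝ᵥ A *ᵥ y ≤ ∑ i, -(δ * (∑ j, |A i j|) * |u i|) :=
          Finset.sum_le_sum fun i _ => (hu i).2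
      _ = -(δ * ∑ i, |u i| * ∑ j, |A i j|) := by
          rw [Finset.mul_sum, ← Finset.sum_neg_distrib]
          exact Finset.sum_congr rfl fun _ _ => by ring
  linarith [(abs_le.1 hquad).2]

theorem dotProduct_mulVec_le_of_norm_sub_sub_le (hA : A.IsSymm)
    (hy : ∀ i, δ * ∑ j, |A i j| ≤ |(A *ᵥ y) i|) {x : ι → ℝ}
    (hx : ‖x - (y - δ • fun i => if 0 ≤ (A *ᵥ y) i then (1 : ℝ) else -1)‖ ≤ δ) :
    x ⬝ᵥ A *ᵥ x ≤ y ⬝ᵥ A *ᵥ y := by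
  have hu : ∀ i, |(x - y) i| ≤ 2 * δ ∧
      (x - y) i * (A *ᵥ y) i ≤ -(δ * (∑ j, |A i j|) * |(x - y) i|) := fun i =>
    abs_le_and_mul_le_of_abs_add_le (w := (x - y) i) (hy i) <| calc
      _ = ‖(x - (y - δ • fun i => if 0 ≤ (A *ᵥ y) i then (1 : ℝ) else -1)) i‖ := by
        rw [Real.norm_eq_abs]; congr 1; simp only [Pi.sub_apply, Pi.smul_apply, smul_eq_mul]; ring
      _ ≤ δ := (norm_le_pi_norm _ i).trans hx
  simpa only [add_sub_cancel] using dotProduct_mulVec_add_le hA hu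

theorem dotProduct_mulVec_le_of_norm_sub_add_le (hA : A.IsSymm)
    (hy : ∀ i, δ * ∑ j, |A i j| ≤ |(A *ᵥ y) i|) {x : ι → ℝ}
    (hx : ‖x - (y + δ • fun i => if 0 ≤ (A *ᵥ y) i then (1 : ℝ) else -1)‖ ≤ δ) :
    y ⬝ᵥ A *ᵥ y ≤ x ⬝ᵥ A *ᵥ x := by
  -- moving along the signs of `A *ᵥ y` is moving against the signs of `(-A) *ᵥ y`
  have hu : ∀ i, |(x - y) i| ≤ 2 * δ ∧
      (x - y) i * ((-A) *ᵥ y) i ≤ -(δ * (∑ j, |(-A) i j|) * |(x - y) i|) := fun i => by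
    have h := abs_le_and_mul_le_of_abs_add_le (w := (y - x) i) (hy i) <| calc
      _ = ‖(x - (y + δ • fun i => if 0 ≤ (A *ᵥ y) i then (1 : ℝ) else -1)) i‖ := by
        rw [Real.norm_eq_abs, ← abs_neg]; congr 1
        simp only [Pi.sub_apply, Pi.add_apply, Pi.smul_apply, smul_eq_mul]; ring
      _ ≤ δ := (norm_le_pi_norm _ i).trans hx
    simp only [Matrix.neg_mulVec, Matrix.neg_apply, abs_neg, Pi.neg_apply, Pi.sub_apply,
      abs_sub_comm (x i)] at h ⊢
    constructor <;> linarith [h.1, h.2]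
  simpa only [add_sub_cancel, Matrix.neg_mulVec, dotProduct_neg, neg_le_neg_iff] using
    dotProduct_mulVec_add_le hA.neg hu

theorem robust_of_le_abs_mulVec (hA : A.IsSymm) (hy : ∀ i, δ * ∑ j, |A i j| ≤ |(A *ᵥ y) i|) :
    (∀ (x : ι → ℝ) (z : ℝ),
      ‖x - (y - δ • fun i => if 0 ≤ (A *ᵥ y) i then (1 : ℝ) else -1)‖ ≤ δ →
      |z - (y ⬝ᵥ A *ᵥ y + δ)| ≤ δ → x ⬝ᵥ A *ᵥ x ≤ z) ∧
    (∀ (x : ι → ℝ) (z : ℝ),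
      ‖x - (y + δ • fun i => if 0 ≤ (A *ᵥ y) i then (1 : ℝ) else -1)‖ ≤ δ →
      |z - (y ⬝ᵥ A *ᵥ y - δ)| ≤ δ → z ≤ x ⬝ᵥ A *ᵥ x) :=
  ⟨fun _ _ hx hz => by
    linarith [dotProduct_mulVec_le_of_norm_sub_sub_le hA hy hx, (abs_le.1 hz).1],
   fun _ _ hx hz => by
    linarith [dotProduct_mulVec_le_of_norm_sub_add_le hA hy hx, (abs_le.1 hz).2]⟩

end Robustness

theorem map_dotProduct_pi_gaussianReal :
    ∀ {n : ℕ} (μ : Fin n → ℝ) (v : Fin n → ℝ≥0) (c : Fin n → ℝ),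
    (Measure.pi fun j => gaussianReal (μ j) (v j)).map (c ⬝ᵥ ·)
      = gaussianReal (c ⬝ᵥ μ) (∑ j, ‖c j‖₊ ^ 2 * v j)
  | 0, μ, v, c => by simp [dotProduct, Measure.map_const]
  | n + 1, μ, v, c => by
    set e := MeasurableEquiv.piFinSuccAbove (fun _ : Fin (n + 1) => ℝ) 0
    have hsplit : (c ⬝ᵥ ·) = (fun p : ℝ × ℝ => p.1 + p.2) ∘
        Prod.map (c 0 * ·) (Fin.tail c ⬝ᵥ ·) ∘ e := by
      ext y
      simp [e, dotProduct, Fin.sum_univ_succ, Fin.tail]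
    rw [hsplit, ← Measure.map_map (by fun_prop) (by fun_prop),
      ← Measure.map_map (by fun_prop) e.measurable,
      (measurePreserving_piFinSuccAbove (fun j => gaussianReal (μ j) (v j)) 0).map_eq,
      ← Measure.map_prod_map _ _ (by fun_prop) (by fun_prop), gaussianReal_map_const_mul,
      map_dotProduct_pi_gaussianReal (fun j => μ (Fin.succAbove 0 j))]
    exact (gaussianReal_conv_gaussianReal).trans (by
      simp [dotProduct, Fin.sum_univ_succ, Fin.tail]; congr 2; exact NNReal.eq (by simp))

theorem gaussianReal_le_ofReal_mul_volume (μ : ℝ) {v : ℝ≥0} (hv : v ≠ 0) (s : Set ℝ) :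
    gaussianReal μ v s ≤ ENNReal.ofReal (√(2 * Real.pi * v))⁻¹ * volume s := by
  rw [gaussianReal_apply μ hv, ← setLIntegral_const]
  refine lintegral_mono fun x => ENNReal.ofReal_le_ofReal ?_
  rw [gaussianPDFReal]
  refine mul_le_of_le_one_right (by positivity) (Real.exp_le_one_iff.2 ?_)
  exact div_nonpos_of_nonpos_of_nonneg (neg_nonpos.2 (sq_nonneg _)) (by positivity)

theorem sum_abs_le_sqrt_card_mul_sqrt_sum_sq {ι : Type*} [Fintype ι] (c : ι → ℝ) :
    ∑ i, |c i| ≤ √(Fintype.card ι) * √(∑ i, c i ^ 2) := by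
  rw [← Real.sqrt_mul (Nat.cast_nonneg _), Real.le_sqrt (by positivity) (by positivity)]
  simpa only [sq_abs, Finset.card_univ] using
    sq_sum_le_card_mul_sum_sq (s := Finset.univ) (f := fun i => |c i|)

theorem sum_sq_pos_of_ne_zero {ι : Type*} [Fintype ι] {c : ι → ℝ} (hc : c ≠ 0) :
    0 < ∑ i, c i ^ 2 := by
  obtain ⟨j, hj⟩ := Function.ne_iff.mp hc
  exact Finset.sum_pos' (fun _ _ => sq_nonneg _) ⟨j, Finset.mem_univ _, pow_two_pos_of_ne_zero hj⟩

theorem pi_gaussianReal_abs_dotProduct_lt_le_div_sqrt {n : ℕ} {c : Fin n → ℝ} (hc : c ≠ 0)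
    {v : ℝ≥0} (hv : v ≠ 0) (t : ℝ) :
    Measure.pi (fun _ : Fin n => gaussianReal 0 v) {y | |c ⬝ᵥ y| < t}
      ≤ ENNReal.ofReal (2 * t / √(2 * Real.pi * ((∑ j, c j ^ 2) * v))) := by
  have hS := sum_sq_pos_of_ne_zero hc
  set V := ∑ j, ‖c j‖₊ ^ 2 * v
  have hV : (V : ℝ) = (∑ j, c j ^ 2) * v := by simp [V, Finset.sum_mul]
  have hV₀ : V ≠ 0 :=
    NNReal.coe_ne_zero.1 (hV ▸ (mul_pos hS (NNReal.coe_pos.2 (pos_iff_ne_zero.2 hv))).ne')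
  have hmap : (Measure.pi fun _ => gaussianReal 0 v).map (c ⬝ᵥ ·) = gaussianReal 0 V := by
    simpa using map_dotProduct_pi_gaussianReal (fun _ => 0) (fun _ => v) c
  have hset : {y | |c ⬝ᵥ y| < t} = (c ⬝ᵥ ·) ⁻¹' Set.Ioo (-t) t := by
    ext; simp [abs_lt]
  rw [hset, ← Measure.map_apply (by fun_prop) measurableSet_Ioo, hmap]
  refine (gaussianReal_le_ofReal_mul_volume _ hV₀ _).trans_eq ?_
  rw [Real.volume_Ioo, ← ENNReal.ofReal_mul (by positivity), hV]
  ring_nf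

theorem pi_gaussianReal_abs_dotProduct_lt_mul_sum_abs_le {n : ℕ} {c : Fin n → ℝ} (hc : c ≠ 0)
    {v : ℝ≥0} (hv : v ≠ 0) {δ : ℝ} (hδ : 0 ≤ δ) :
    Measure.pi (fun _ : Fin n => gaussianReal 0 v) {y | |c ⬝ᵥ y| < δ * ∑ j, |c j|}
      ≤ ENNReal.ofReal (δ * √n / √v) := by
  refine (pi_gaussianReal_abs_dotProduct_lt_le_div_sqrt hc hv _).trans
    (ENNReal.ofReal_le_ofReal ?_)
  have h2π : 2 ≤ √(2 * Real.pi) := Real.le_sqrt_of_sq_le (by nlinarith [Real.pi_gt_three])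
  have hn := sum_abs_le_sqrt_card_mul_sqrt_sum_sq c
  rw [Fintype.card_fin] at hn
  have hS' := sum_sq_pos_of_ne_zero hc
  have hS : 0 < √(∑ j, c j ^ 2) := Real.sqrt_pos.2 hS'
  calc 2 * (δ * ∑ j, |c j|) / √(2 * Real.pi * ((∑ j, c j ^ 2) * v))
      = 2 * δ * (∑ j, |c j|) / (√(2 * Real.pi) * √(∑ j, c j ^ 2) * √v) := by
        rw [Real.sqrt_mul (by positivity : (0 : ℝ) ≤ 2 * Real.pi),
          Real.sqrt_mul hS'.le]
        ring
    _ ≤ 2 * δ * (√n * √(∑ j, c j ^ 2)) / (√(2 * Real.pi) * √(∑ j, c j ^ 2) * √v) := by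
        gcongr
    _ = 2 / √(2 * Real.pi) * (δ * √n / √v) := by
        field_simp
    _ ≤ 1 * (δ * √n / √v) := by
        gcongr
        exact (div_le_one (by positivity)).2 h2π
    _ = δ * √n / √v := one_mul _

theorem one_sub_le_toReal_of_measure_compl_le {Ω : Type*} [MeasurableSpace Ω] {P : Measure Ω}
    [IsProbabilityMeasure P] {s : Set Ω} {η : ℝ} (hη : 0 ≤ η) (h : P sᶜ ≤ ENNReal.ofReal η) :
    1 - η ≤ (P s).toReal := by
  have h1 : 1 ≤ P s + ENNReal.ofReal η :=
    calc 1 = P (s ∪ sᶜ) := by simp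
      _ ≤ P s + P sᶜ := measure_union_le _ _
      _ ≤ P s + ENNReal.ofReal η := by gcongr
  have h2 := ENNReal.toReal_mono (by finiteness) h1
  rw [ENNReal.toReal_add (measure_ne_top _ _) ENNReal.ofReal_ne_top, ENNReal.toReal_ofReal hη,
    ENNReal.toReal_one] at h2
  linarith

theorem pi_iUnion_eval_preimage_le {ι κ α : Type*} [Fintype ι] [Fintype κ] [MeasurableSpace α]
    {μ : Measure α} [IsProbabilityMeasure μ] {B : κ → Set α} (hB : ∀ k, MeasurableSet (B k))
    {ε : ℝ} (hε : ∀ k, μ (B k) ≤ ENNReal.ofReal ε) :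
    Measure.pi (fun _ : ι => μ) (⋃ l, ⋃ k, Function.eval l ⁻¹' B k)
      ≤ ENNReal.ofReal (Fintype.card ι * (Fintype.card κ * ε)) :=
  calc _ ≤ ∑ l : ι, ∑ k : κ, Measure.pi (fun _ : ι => μ) (Function.eval l ⁻¹' B k) :=
        (measure_iUnion_fintype_le _ _).trans
          (Finset.sum_le_sum fun _ _ => measure_iUnion_fintype_le _ _)
    _ ≤ ∑ _l : ι, ∑ _k : κ, ENNReal.ofReal ε := by
        gcongr with l _ k
        rw [(measurePreserving_eval _ l).measure_preimage (hB k).nullMeasurableSet]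
        exact hε k
    _ = ENNReal.ofReal (Fintype.card ι * (Fintype.card κ * ε)) := by
        simp [ENNReal.ofReal_mul, ENNReal.ofReal_natCast]

/-- There is a universal constant `C > 0` such that for all `n, m ≥ 1`,
`δ > 0`, `η ∈ (0,1)`, a symmetric matrix `A` with zero diagonal whose rows are all
nonzero, and `ρ ≥ C·δ·n^{3/2}·m/η`: if `x⁽¹⁾, …, x⁽ᵐ⁾` are independent `N(0,ρ²)ⁿ`
vectors and `s⁽ˡ⁾ᵢ = sgn(⟨Aᵢ, x⁽ˡ⁾⟩)`, then with probability at least `1 − η`, for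
every `ℓ`: `z ≥ xᵀAx` on the ℓ∞ ball of radius `δ` around
`(x⁽ˡ⁾ − δs⁽ˡ⁾, p(x⁽ˡ⁾) + δ)` and `z ≤ xᵀAx` on the ℓ∞ ball of radius `δ` around
`(x⁽ˡ⁾ + δs⁽ˡ⁾, p(x⁽ˡ⁾) − δ)`, where `p(x) = xᵀAx`. `Fin n → ℝ` carries the sup
norm. -/
theorem stmt_11 : ∃ C : ℝ, 0 < C ∧
    ∀ (n m : ℕ), 1 ≤ n → 1 ≤ m → ∀ δ η ρ : ℝ, 0 < δ → 0 < η → η < 1 →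
    ∀ A : Matrix (Fin n) (Fin n) ℝ, A.IsSymm → (∀ i, A i i = 0) → (∀ i, A i ≠ 0) →
    C * δ * (n : ℝ) ^ ((3 : ℝ) / 2) * m / η ≤ ρ →
    (1 : ℝ) - η ≤
      ((Measure.pi fun _ : Fin m =>
          Measure.pi fun _ : Fin n => gaussianReal 0 (Real.toNNReal (ρ ^ 2)))
        {X : Fin m → Fin n → ℝ | ∀ ℓ : Fin m,
          (∀ (x : Fin n → ℝ) (z : ℝ),
            ‖x - (X ℓ - δ • (fun i => if 0 ≤ ∑ j, A i j * X ℓ j then (1 : ℝ) else -1))‖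
              ≤ δ →
            |z - ((∑ i, ∑ j, A i j * X ℓ i * X ℓ j) + δ)| ≤ δ →
            (∑ i, ∑ j, A i j * x i * x j) ≤ z) ∧
          (∀ (x : Fin n → ℝ) (z : ℝ),
            ‖x - (X ℓ + δ • (fun i => if 0 ≤ ∑ j, A i j * X ℓ j then (1 : ℝ) else -1))‖
              ≤ δ →
            |z - ((∑ i, ∑ j, A i j * X ℓ i * X ℓ j) - δ)| ≤ δ →
            z ≤ ∑ i, ∑ j, A i j * x i * x j)}).toReal := by
  refine ⟨1, one_pos, fun n m hn hm δ η ρ hδ hη _ A hA _ hrows hρ => ?_⟩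
  have hn₀ : (0 : ℝ) < n := by exact_mod_cast hn
  have hn32 : (n : ℝ) ^ ((3 : ℝ) / 2) = n * √n := by
    rw [show (3 : ℝ) / 2 = 1 + 1 / 2 by norm_num, Real.rpow_add hn₀, Real.rpow_one,
      Real.sqrt_eq_rpow]
  rw [hn32, one_mul, div_le_iff₀ hη] at hρ
  have hρ₀ : 0 < ρ := pos_of_mul_pos_left (lt_of_lt_of_le (by positivity) hρ) hη.le
  have hσ : √((ρ ^ 2).toNNReal : ℝ) = ρ := by
    rw [Real.coe_toNNReal _ (sq_nonneg ρ), Real.sqrt_sq hρ₀.le]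
  have hrow : ∀ i, (Measure.pi fun _ : Fin n => gaussianReal 0 (ρ ^ 2).toNNReal)
      {y | |A i ⬝ᵥ y| < δ * ∑ j, |A i j|} ≤ ENNReal.ofReal (δ * √n / ρ) := fun i =>
    (pi_gaussianReal_abs_dotProduct_lt_mul_sum_abs_le (hrows i) (by simp [hρ₀.ne']) hδ.le).trans_eq
      (by rw [hσ])
  refine one_sub_le_toReal_of_measure_compl_le hη.le <| (measure_mono ?_).trans <|
    (pi_iUnion_eval_preimage_le (fun i => measurableSet_lt (by fun_prop) measurable_const)
      hrow).trans (ENNReal.ofReal_le_ofReal ?_)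
  · refine Set.compl_subset_comm.1 fun X hX => ?_
    simp only [Set.mem_compl_iff, Set.mem_iUnion, Set.mem_preimage, Set.mem_ofPred_eq,
      not_exists, not_lt, sum_sum_mul_mul_eq_dotProduct_mulVec] at hX ⊢
    exact fun ℓ => robust_of_le_abs_mulVec hA (hX ℓ)
  · rw [Fintype.card_fin, Fintype.card_fin, ← mul_assoc, mul_div_assoc', div_le_iff₀ hρ₀]
    linarith
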